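/- arXiv:2509.20249 — 5 statements merged into one kernel-verified Lean document; each statement's English description precedes it below -/
import Mathlib

section
/- Let {X_i, i = 1, ..., n} and {Y_i, i = 1, ..., n} be independent i.i.d. samples from the unit exponential distribution, with order statistics X_(1) ≤ ... ≤ X_(n) and Y_(1) ≤ ... ≤ Y_(n). Let F(x) = 1 - e^{-x} be the unit exponential CDF, and suppose thresholds 0 < u_n < v_n satisfy min{F(u_n), 1 - F(v_n)}/√(log n / n) → ∞ as n → ∞. Then q_n^{(u_n, v_n)} := max_{1 ≤ i ≤ n} [max{min{v_n, X_(i)}, u_n} / max{min{v_n, Y_(i)}, u_n}] converges in probability to 1 as n → ∞. -/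
open MeasureTheory ProbabilityTheory Filter Finset Real Topology ENNReal

/-- `orderStat n v i` is the `i`-th order statistic (1-indexed) of the values
`v 0, …, v (n-1)`, i.e. the `i`-th smallest among them. -/
noncomputable def orderStat (n : ℕ) (v : ℕ → ℝ) (i : ℕ) : ℝ :=
  ((List.ofFn fun j : Fin n => v j).insertionSort (· ≤ ·)).getD (i - 1) 0

/-- The cumulative distribution function of the unit exponential distribution. -/
noncomputable def unitExpCDF (x : ℝ) : ℝ := if 0 ≤ x then 1 - Real.exp (-x) else 0

/-! Fix one sample `W` with a continuous distribution function `F`. The event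
`F (W_(i+1)) > (i+1)/n + δ` says that fewer than `i + 1` sample points lie below the
`(i+1)/n + δ` quantile, a deviation `nδ` of a binomial count, which Hoeffding's inequality
bounds by `exp (-2nδ²)`; the lower deviation is symmetric. For `δ = √(log n / n)` a union
bound over `i` and the two samples shows that, outside probability `4/n`,
`|F X_(i) - F Y_(i)| ≤ 2δ` for all `i`. Clipping to `[u, v]` does not increase this distance,
and on `[u, v]` the exponential quantile function turns a gap `η ≤ m/2`, where
`m = min (F u) (1 - F v)`, into a relative error at most `e η / m`: near `0` because the
clipped values are at least `m`, beyond `1` because the density there is at least `m`.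
Hence every ratio, and their maximum, is within `2eδ/m → 0` of `1`. -/

namespace List.SortedLE

variable {α : Type*} [LinearOrder α] {l : List α}

theorem getElem_le_iff_lt_countP (hl : l.SortedLE) {i : ℕ} (hi : i < l.length) (t : α) :
    l[i] ≤ t ↔ i < l.countP (· ≤ t) := by
  constructor
  · intro h
    have htake : (l.take (i + 1)).countP (· ≤ t) = i + 1 := by
      rw [List.countP_eq_length.mpr, List.length_take_of_le hi]
      intro a ha
      obtain ⟨j, hj, rfl⟩ := List.getElem_of_mem ha
      rw [List.getElem_take, decide_eq_true_eq]
      exact (hl.getElem_le_getElem_of_le (by simp at hj; omega)).trans h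
    have := (List.take_sublist (i + 1) l).countP_le (p := (· ≤ t))
    omega
  · intro h
    by_contra! h'
    have hdrop : (l.drop i).countP (· ≤ t) = 0 := by
      refine List.countP_eq_zero.mpr fun a ha => ?_
      obtain ⟨j, hj, rfl⟩ := List.getElem_of_mem ha
      rw [List.getElem_drop, decide_eq_true_eq, not_le]
      exact h'.trans_le (hl.getElem_le_getElem_of_le (Nat.le_add_right i j))
    have : l.countP (· ≤ t) ≤ i := by
      rw [← List.take_append_drop i l, List.countP_append, hdrop, add_zero]
      exact List.countP_le_length.trans (List.length_take_le _ _)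
    omega

end List.SortedLE

theorem List.countP_ofFn_eq_card_filter_range {α : Type*} (p : α → Prop) [DecidablePred p]
    (n : ℕ) (w : ℕ → α) :
    (List.ofFn fun j : Fin n => w j).countP (fun x => decide (p x)) =
      #{j ∈ Finset.range n | p (w j)} := by
  induction n with
  | zero => simp
  | succ n ih =>
    simp only [List.ofFn_succ_last, List.countP_append, Fin.val_castSucc, Fin.val_last, ih,
      Finset.range_add_one, filter_insert]
    split_ifs with h <;> simp [h]

theorem orderStat_le_iff {n i : ℕ} (hi : i < n) (w : ℕ → ℝ) (t : ℝ) :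
    orderStat n w (i + 1) ≤ t ↔ i < #{j ∈ range n | w j ≤ t} := by
  have hperm := List.perm_insertionSort (· ≤ ·) (List.ofFn fun j : Fin n => w j)
  have hlen : i < (List.insertionSort (· ≤ ·) (List.ofFn fun j : Fin n => w j)).length := by
    simpa [hperm.length_eq] using hi
  rw [orderStat, Nat.add_sub_cancel, List.getD_eq_getElem _ _ hlen,
    List.sortedLE_insertionSort.getElem_le_iff_lt_countP, hperm.countP_eq,
    List.countP_ofFn_eq_card_filter_range]

theorem unitExpCDF_of_nonneg {x : ℝ} (hx : 0 ≤ x) : unitExpCDF x = 1 - exp (-x) := if_pos hx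

theorem unitExpCDF_nonneg (x : ℝ) : 0 ≤ unitExpCDF x := by
  unfold unitExpCDF
  split_ifs with hx
  · linarith [exp_le_one_iff.mpr (neg_nonpos.mpr hx)]
  · exact le_rfl

theorem unitExpCDF_le_one (x : ℝ) : unitExpCDF x ≤ 1 := by
  unfold unitExpCDF
  split_ifs
  · linarith [exp_pos (-x)]
  · exact zero_le_one

theorem unitExpCDF_monotone : Monotone unitExpCDF := by
  intro x y hxy
  unfold unitExpCDF
  split_ifs with hx hy hy
  · linarith [exp_le_exp.mpr (neg_le_neg hxy)]
  · linarith
  · linarith [exp_le_one_iff.mpr (neg_nonpos.mpr hy)]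
  · exact le_rfl

theorem pos_of_unitExpCDF_pos {x : ℝ} (h : 0 < unitExpCDF x) : 0 < x := by
  by_contra! hx
  unfold unitExpCDF at h
  split_ifs at h with hx'
  · simp [le_antisymm hx hx'] at h
  · exact lt_irrefl 0 h

theorem unitExpCDF_neg_log_one_sub {q : ℝ} (hq0 : 0 ≤ q) (hq1 : q < 1) :
    unitExpCDF (-Real.log (1 - q)) = q := by
  rw [unitExpCDF_of_nonneg (neg_nonneg.mpr (log_nonpos (by linarith) (by linarith))), neg_neg,
    Real.exp_log (by linarith), _root_.sub_sub_cancel]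

theorem sub_le_of_exp_neg_sub_exp_neg_le {ℓ h m : ℝ} (hm : 0 < m) (hℓh : ℓ ≤ h)
    (hℓ : m ≤ 1 - exp (-ℓ)) (hh : m ≤ exp (-h)) (hgap : exp (-ℓ) - exp (-h) ≤ m / 2) :
    h - ℓ ≤ ℓ * (exp 1 * (exp (-ℓ) - exp (-h)) / m) := by
  set D := exp (-ℓ) - exp (-h)
  have hD : 0 ≤ D := sub_nonneg.mpr (exp_le_exp.mpr (neg_le_neg hℓh))
  have hmℓ : m ≤ ℓ := hℓ.trans (by linarith [add_one_le_exp (-ℓ)])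
  have he : 2 ≤ exp 1 := by linarith [add_one_le_exp (1 : ℝ)]
  have hgap' : h - ℓ ≤ D / exp (-h) := by
    have : D = exp (-h) * (exp (h - ℓ) - 1) := by
      simp only [D, mul_sub, ← exp_add]; ring_nf
    rw [this, mul_div_cancel_left₀ _ (exp_pos _).ne']
    linarith [add_one_le_exp (h - ℓ)]
  rcases le_or_gt h 1 with h1 | h1
  · calc h - ℓ ≤ D / exp (-h) := hgap'
      _ ≤ D / exp (-1) := by gcongr
      _ = exp 1 * D := by rw [exp_neg, div_inv_eq_mul, mul_comm]
      _ ≤ exp 1 * D * (ℓ / m) :=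
        le_mul_of_one_le_right (by positivity) ((one_le_div hm).mpr hmℓ)
      _ = ℓ * (exp 1 * D / m) := by ring
  · have hDm : h - ℓ ≤ D / m := hgap'.trans (div_le_div_of_nonneg_left hD hm hh)
    have hℓ2 : 1 / 2 ≤ ℓ := by
      have : D / m ≤ 1 / 2 := by rw [div_le_iff₀ hm]; linarith
      linarith
    calc h - ℓ ≤ D / m := hDm
      _ ≤ ℓ * (exp 1 * D / m) := by
        rw [mul_div_assoc, ← mul_assoc]
        exact le_mul_of_one_le_left (by positivity) (by nlinarith)

theorem abs_div_sub_one_le_of_mem_Icc {u v x y m : ℝ} (hm : 0 < m) (hmu : m ≤ unitExpCDF u)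
    (hmv : m ≤ 1 - unitExpCDF v) (hx : x ∈ Set.Icc u v) (hy : y ∈ Set.Icc u v)
    (hxy : |unitExpCDF x - unitExpCDF y| ≤ m / 2) :
    |x / y - 1| ≤ exp 1 * |unitExpCDF x - unitExpCDF y| / m := by
  have hu : 0 < u := pos_of_unitExpCDF_pos (hm.trans_le hmu)
  have key : ∀ {ℓ h}, ℓ ∈ Set.Icc u v → h ∈ Set.Icc u v → ℓ ≤ h →
      |unitExpCDF h - unitExpCDF ℓ| ≤ m / 2 →
      h - ℓ ≤ ℓ * (exp 1 * |unitExpCDF h - unitExpCDF ℓ| / m) := by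
    intro ℓ h hℓ hh hℓh hgap
    have hℓ0 : 0 ≤ ℓ := hu.le.trans hℓ.1
    have hFℓ := unitExpCDF_of_nonneg hℓ0
    have hgap_eq : |unitExpCDF h - unitExpCDF ℓ| = exp (-ℓ) - exp (-h) := by
      rw [abs_of_nonneg (sub_nonneg.mpr (unitExpCDF_monotone hℓh)),
        unitExpCDF_of_nonneg (hℓ0.trans hℓh), hFℓ]
      ring
    rw [hgap_eq] at hgap ⊢
    refine sub_le_of_exp_neg_sub_exp_neg_le hm hℓh ?_ ?_ hgap
    · exact hFℓ ▸ hmu.trans (unitExpCDF_monotone hℓ.1)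
    · linarith [unitExpCDF_monotone hh.2, unitExpCDF_of_nonneg (hℓ0.trans hℓh)]
  have hy0 : 0 < y := hu.trans_le hy.1
  have hr : 0 ≤ exp 1 * |unitExpCDF x - unitExpCDF y| / m := by positivity
  rw [div_sub_one hy0.ne', abs_div, abs_of_pos hy0, div_le_iff₀ hy0]
  rcases le_total y x with hyx | hxy'
  · rw [abs_of_nonneg (sub_nonneg.mpr hyx)]
    linarith [key hy hx hyx hxy]
  · rw [abs_of_nonpos (sub_nonpos.mpr hxy'), neg_sub]
    have := key hx hy hxy' (by rwa [abs_sub_comm])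
    rw [abs_sub_comm] at this
    nlinarith

theorem abs_ciSup_sub_le {ι : Type*} [Finite ι] [Nonempty ι] {f : ι → ℝ} {c η : ℝ}
    (h : ∀ i, |f i - c| ≤ η) : |(⨆ i, f i) - c| ≤ η := by
  obtain ⟨i, hi⟩ := exists_eq_ciSup_of_finite (f := f)
  exact hi ▸ h i

theorem abs_max_min_sub_max_min_le (a b x y : ℝ) :
    |max (min b x) a - max (min b y) a| ≤ |x - y| :=
  (abs_max_sub_max_le_abs _ _ _).trans ((abs_min_sub_min_le_max _ _ _ _).trans (by simp))

theorem unitExpCDF_max_min (u v x : ℝ) :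
    unitExpCDF (max (min v x) u) = max (min (unitExpCDF v) (unitExpCDF x)) (unitExpCDF u) := by
  rw [unitExpCDF_monotone.map_max, unitExpCDF_monotone.map_min]

theorem abs_iSup_max_min_div_sub_one_le {ι : Type*} [Finite ι] [Nonempty ι] {u v m η : ℝ}
    (huv : u ≤ v) (hm : 0 < m) (hmu : m ≤ unitExpCDF u) (hmv : m ≤ 1 - unitExpCDF v)
    (hη : 2 * η ≤ m) {x y : ι → ℝ}
    (hxy : ∀ i, |unitExpCDF (x i) - unitExpCDF (y i)| ≤ η) :
    |(⨆ i, max (min v (x i)) u / max (min v (y i)) u) - 1| ≤ exp 1 * η / m := by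
  have hclip : ∀ z, max (min v z) u ∈ Set.Icc u v :=
    fun z => ⟨le_max_right _ _, max_le (min_le_left _ _) huv⟩
  refine abs_ciSup_sub_le fun i => ?_
  have hgap : |unitExpCDF (max (min v (x i)) u) - unitExpCDF (max (min v (y i)) u)| ≤ η := by
    rw [unitExpCDF_max_min, unitExpCDF_max_min]
    exact (abs_max_min_sub_max_min_le _ _ _ _).trans (hxy i)
  calc _ ≤ exp 1 * |unitExpCDF (max (min v (x i)) u) - unitExpCDF (max (min v (y i)) u)| / m :=
        abs_div_sub_one_le_of_mem_Icc hm hmu hmv (hclip _) (hclip _) (by linarith)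
    _ ≤ exp 1 * η / m := by gcongr

theorem abs_iSup_orderStat_max_min_div_sub_one_le {n : ℕ} (hn : n ≠ 0) {u v m δ : ℝ}
    (huv : u ≤ v) (hm : 0 < m) (hmu : m ≤ unitExpCDF u) (hmv : m ≤ 1 - unitExpCDF v)
    (hδ : 4 * δ ≤ m) {x y : ℕ → ℝ}
    (hx : ∀ i : Fin n, |unitExpCDF (orderStat n x (i + 1)) - (i + 1) / n| ≤ δ)
    (hy : ∀ i : Fin n, |unitExpCDF (orderStat n y (i + 1)) - (i + 1) / n| ≤ δ) :
    |(⨆ i : Fin n, max (min v (orderStat n x (i + 1))) u /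
        max (min v (orderStat n y (i + 1))) u) - 1| ≤ exp 1 * (2 * δ) / m := by
  have : Nonempty (Fin n) := ⟨⟨0, Nat.pos_of_ne_zero hn⟩⟩
  refine abs_iSup_max_min_div_sub_one_le huv hm hmu hmv (by linarith) fun i => ?_
  calc _ ≤ _ := abs_sub_le _ ((((i : ℕ) : ℝ) + 1) / n) _
    _ ≤ 2 * δ := by rw [abs_sub_comm ((((i : ℕ) : ℝ) + 1) / n)]; linarith [hx i, hy i]

section Hoeffding

variable {Ω : Type*} [MeasurableSpace Ω] {μ : Measure Ω} [IsProbabilityMeasure μ]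

theorem hasSubgaussianMGF_indicator_Iic_sub {W : Ω → ℝ} (hW : Measurable W) (t : ℝ) :
    HasSubgaussianMGF (fun ω => (Set.Iic t).indicator 1 (W ω) - μ.real {ω | W ω ≤ t})
      (4⁻¹) μ := by
  have hI : Measurable fun ω => (Set.Iic t).indicator (1 : ℝ → ℝ) (W ω) :=
    (measurable_one.indicator measurableSet_Iic).comp hW
  have hmean :
      ∫ ω, (Set.Iic t).indicator (1 : ℝ → ℝ) (W ω) ∂μ = μ.real {ω | W ω ≤ t} := by
    simp_rw [← Set.indicator_comp_right W]
    exact integral_indicator_one (hW measurableSet_Iic)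
  have h := hasSubgaussianMGF_of_mem_Icc (μ := μ) (a := 0) (b := 1) hI.aemeasurable
    (ae_of_all _ fun ω => by by_cases h : W ω ≤ t <;> simp [Set.indicator, h])
  rw [hmean] at h
  convert h using 1
  ext1; norm_num

theorem measureReal_card_filter_tails_le {W : ℕ → Ω → ℝ} (hind : iIndepFun W μ)
    (hW : ∀ j, Measurable (W j)) {t p : ℝ} (hp : ∀ j, μ.real {ω | W j ω ≤ t} = p)
    (n : ℕ) {δ : ℝ} (hδ : 0 ≤ δ) :
    μ.real {ω | n * p + n * δ ≤ #{j ∈ range n | W j ω ≤ t}} ≤ exp (-2 * n * δ ^ 2) ∧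
      μ.real {ω | (#{j ∈ range n | W j ω ≤ t} : ℝ) ≤ n * p - n * δ} ≤
        exp (-2 * n * δ ^ 2) := by
  set Z : ℕ → Ω → ℝ := fun j ω => (Set.Iic t).indicator 1 (W j ω) - p
  have hZ : ∀ j, HasSubgaussianMGF (Z j) 4⁻¹ μ :=
    fun j => by simpa only [hp j] using hasSubgaussianMGF_indicator_Iic_sub (μ := μ) (hW j) t
  have hφ : Measurable fun x : ℝ => (Set.Iic t).indicator 1 x - p :=
    (measurable_one.indicator measurableSet_Iic).sub_const _
  have hindZ : iIndepFun Z μ := hind.comp _ fun _ => hφ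
  have hindZ' : iIndepFun (fun j => -Z j) μ := hind.comp _ fun _ => hφ.neg
  have hsum : ∀ ω, ∑ j ∈ range n, Z j ω = #{j ∈ range n | W j ω ≤ t} - n * p := by
    intro ω
    simp only [Z, sum_sub_distrib, natCast_card_filter, Set.indicator_apply, Set.mem_Iic,
      Pi.one_apply, sum_const, card_range, nsmul_eq_mul]
  have hexp : -(n * δ) ^ 2 / (2 * n * ((4⁻¹ : NNReal) : ℝ)) = -2 * n * δ ^ 2 := by
    rcases n.eq_zero_or_pos with rfl | hn
    · simp
    · field_simp
      norm_num
      ring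
  constructor
  · have h := HasSubgaussianMGF.measure_sum_range_ge_le_of_iIndepFun hindZ (n := n)
      (fun j _ => hZ j) (ε := n * δ) (by positivity)
    rw [hexp] at h
    refine (measureReal_mono fun ω hω => ?_).trans h
    simp only [Set.mem_ofPred_eq, hsum] at hω ⊢
    linarith
  · have h := HasSubgaussianMGF.measure_sum_range_ge_le_of_iIndepFun hindZ' (n := n)
      (fun j _ => (hZ j).neg) (ε := n * δ) (by positivity)
    rw [hexp] at h
    refine (measureReal_mono fun ω hω => ?_).trans h
    simp only [Set.mem_ofPred_eq, Pi.neg_apply, sum_neg_distrib, hsum] at hω ⊢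
    linarith

end Hoeffding

section OrderStatistics

variable {Ω : Type*} [MeasurableSpace Ω] {μ : Measure Ω} [IsProbabilityMeasure μ]
  {W : ℕ → Ω → ℝ} {F : ℝ → ℝ}

theorem measureReal_orderStat_deviation_le (hind : iIndepFun W μ) (hW : ∀ j, Measurable (W j))
    (hF : Monotone F) (hF0 : ∀ x, 0 ≤ F x) (hF1 : ∀ x, F x ≤ 1)
    (hFsurj : ∀ q ∈ Set.Ioo (0 : ℝ) 1, ∃ t, F t = q)
    (hcdf : ∀ j t, μ.real {ω | W j ω ≤ t} = F t) {n i : ℕ} (hi : i < n) {δ : ℝ}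
    (hδ : 0 < δ) :
    μ.real {ω | δ < |F (orderStat n (fun j => W j ω) (i + 1)) - (i + 1) / n|} ≤
      2 * exp (-2 * n * δ ^ 2) := by
  set p : ℝ := (i + 1) / n
  have hn : (0 : ℝ) < n := by exact_mod_cast i.zero_le.trans_lt hi
  have hnp : n * p = i + 1 := mul_div_cancel₀ _ hn.ne'
  have hp0 : 0 < p := by positivity
  have hp1 : p ≤ 1 := by rw [div_le_one hn]; exact_mod_cast hi
  set S : Ω → ℝ := fun ω => orderStat n (fun j => W j ω) (i + 1)
  have hsplit :
      {ω | δ < |F (S ω) - p|} ⊆ {ω | p + δ < F (S ω)} ∪ {ω | F (S ω) < p - δ} := by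
    intro ω hω
    rcases lt_abs.mp (Set.mem_ofPred_eq ▸ hω) with h | h
    · left; simp only [Set.mem_ofPred_eq]; linarith
    · right; simp only [Set.mem_ofPred_eq]; linarith
  have hupper : μ.real {ω | p + δ < F (S ω)} ≤ exp (-2 * n * δ ^ 2) := by
    by_cases h1 : p + δ < 1
    · obtain ⟨t, ht⟩ := hFsurj (p + δ) ⟨by linarith, h1⟩
      refine (measureReal_mono fun ω hω => ?_).trans
        (measureReal_card_filter_tails_le hind hW (hcdf · t) n hδ.le).2
      have hSt : ¬ S ω ≤ t := fun h => (hF h).not_gt (ht ▸ hω)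
      rw [orderStat_le_iff hi, not_lt] at hSt
      simp only [Set.mem_ofPred_eq, ht]
      have : (#{j ∈ range n | W j ω ≤ t} : ℝ) ≤ i := by exact_mod_cast hSt
      nlinarith
    · have : {ω | p + δ < F (S ω)} = ∅ :=
        Set.eq_empty_of_forall_notMem fun ω hω => by
          linarith [hF1 (S ω), Set.mem_ofPred_eq ▸ hω]
      simp [this, (exp_pos _).le]
  have hlower : μ.real {ω | F (S ω) < p - δ} ≤ exp (-2 * n * δ ^ 2) := by
    by_cases h0 : 0 < p - δ
    · obtain ⟨t, ht⟩ := hFsurj (p - δ) ⟨h0, by linarith⟩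
      refine (measureReal_mono fun ω hω => ?_).trans
        (measureReal_card_filter_tails_le hind hW (hcdf · t) n hδ.le).1
      have hSt : S ω ≤ t := le_of_not_gt fun h => (hF h.le).not_gt (ht ▸ hω)
      rw [orderStat_le_iff hi] at hSt
      simp only [Set.mem_ofPred_eq, ht]
      have : (i : ℝ) + 1 ≤ #{j ∈ range n | W j ω ≤ t} := by exact_mod_cast hSt
      nlinarith
    · have : {ω | F (S ω) < p - δ} = ∅ :=
        Set.eq_empty_of_forall_notMem fun ω hω => by
          linarith [hF0 (S ω), Set.mem_ofPred_eq ▸ hω]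
      simp [this, (exp_pos _).le]
  calc _ ≤ μ.real ({ω | p + δ < F (S ω)} ∪ {ω | F (S ω) < p - δ}) :=
        measureReal_mono hsplit
    _ ≤ _ := (measureReal_union_le _ _).trans (by linarith)

theorem measureReal_exists_orderStat_deviation_le (hind : iIndepFun W μ)
    (hW : ∀ j, Measurable (W j))
    (hF : Monotone F) (hF0 : ∀ x, 0 ≤ F x) (hF1 : ∀ x, F x ≤ 1)
    (hFsurj : ∀ q ∈ Set.Ioo (0 : ℝ) 1, ∃ t, F t = q)
    (hcdf : ∀ j t, μ.real {ω | W j ω ≤ t} = F t) (n : ℕ) {δ : ℝ} (hδ : 0 < δ) :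
    μ.real {ω | ∃ i : Fin n, δ < |F (orderStat n (fun j => W j ω) (i + 1)) - (i + 1) / n|} ≤
      2 * n * exp (-2 * n * δ ^ 2) := by
  rw [Set.ofPred_exists]
  refine (measureReal_iUnion_fintype_le _).trans ?_
  calc _ ≤ ∑ _i : Fin n, 2 * exp (-2 * n * δ ^ 2) := sum_le_sum fun i _ =>
        measureReal_orderStat_deviation_le hind hW hF hF0 hF1 hFsurj hcdf i.isLt hδ
    _ = _ := by simp; ring

theorem measureReal_exists_unitExpCDF_orderStat_deviation_le (hind : iIndepFun W μ)
    (hW : ∀ j, Measurable (W j))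
    (hcdf : ∀ j x, μ {ω | W j ω ≤ x} = ENNReal.ofReal (unitExpCDF x)) (n : ℕ) {δ : ℝ}
    (hδ : 0 < δ) :
    μ.real {ω | ∃ i : Fin n,
        δ < |unitExpCDF (orderStat n (fun j => W j ω) (i + 1)) - (i + 1) / n|} ≤
      2 * n * exp (-2 * n * δ ^ 2) :=
  measureReal_exists_orderStat_deviation_le hind hW unitExpCDF_monotone unitExpCDF_nonneg
    unitExpCDF_le_one (fun _ hq => ⟨_, unitExpCDF_neg_log_one_sub hq.1.le hq.2⟩)
    (fun j x => by rw [measureReal_def, hcdf, toReal_ofReal (unitExpCDF_nonneg x)]) n hδ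

end OrderStatistics

theorem measureReal_le_dist_iSup_orderStat_div_le {Ω : Type*} [MeasurableSpace Ω]
    {μ : Measure Ω} [IsProbabilityMeasure μ] {X Y : ℕ → Ω → ℝ}
    (hmeas : ∀ j, Measurable (Sum.elim X Y j)) (hindep : iIndepFun (Sum.elim X Y) μ)
    (hX : ∀ i x, μ {ω | X i ω ≤ x} = ENNReal.ofReal (unitExpCDF x))
    (hY : ∀ i x, μ {ω | Y i ω ≤ x} = ENNReal.ofReal (unitExpCDF x))
    {n : ℕ} (hn : n ≠ 0) {u v m δ ε : ℝ} (huv : u ≤ v) (hmu : m ≤ unitExpCDF u)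
    (hmv : m ≤ 1 - unitExpCDF v) (hδ : 0 < δ) (hm : 4 * δ ≤ m)
    (hε : exp 1 * (2 * δ) / m < ε) :
    μ.real {ω | ε ≤ dist (⨆ i : Fin n,
        max (min v (orderStat n (fun j => X j ω) (i + 1))) u /
          max (min v (orderStat n (fun j => Y j ω) (i + 1))) u) 1} ≤
      4 * n * exp (-2 * n * δ ^ 2) := by
  refine (measureReal_mono (s₂ :=
    {ω | ∃ i : Fin n,
        δ < |unitExpCDF (orderStat n (fun j => X j ω) (i + 1)) - (i + 1) / n|} ∪
      {ω | ∃ i : Fin n,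
        δ < |unitExpCDF (orderStat n (fun j => Y j ω) (i + 1)) - (i + 1) / n|})
      fun ω hω => ?_).trans ?_
  · by_contra hgood
    simp only [Set.mem_union, Set.mem_ofPred_eq, not_or, not_exists, not_lt] at hgood hω
    have := abs_iSup_orderStat_max_min_div_sub_one_le hn huv (by linarith) hmu hmv hm
      hgood.1 hgood.2
    rw [dist_eq] at hω
    linarith
  · have hXbad := measureReal_exists_unitExpCDF_orderStat_deviation_le (W := X)
      (hindep.precomp (g := Sum.inl) Sum.inl_injective) (fun j => hmeas (.inl j)) hX n hδ
    have hYbad := measureReal_exists_unitExpCDF_orderStat_deviation_le (W := Y)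
      (hindep.precomp (g := Sum.inr) Sum.inr_injective) (fun j => hmeas (.inr j)) hY n hδ
    calc _ ≤ _ := measureReal_union_le _ _
      _ ≤ _ := add_le_add hXbad hYbad
      _ = _ := by ring

theorem natCast_mul_exp_neg_two_mul_sqrt_log_div_sq {n : ℕ} (hn : n ≠ 0) :
    (n : ℝ) * exp (-2 * n * √(Real.log n / n) ^ 2) = (n : ℝ)⁻¹ := by
  have hn' : (0 : ℝ) < n := by positivity
  rw [sq_sqrt (div_nonneg (Real.log_natCast_nonneg n) hn'.le), mul_assoc,
    mul_div_cancel₀ _ hn'.ne', show -2 * Real.log n = -Real.log n + -Real.log n by ring,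
    exp_add, exp_neg, Real.exp_log hn']
  field_simp

/-- For independent i.i.d. unit exponential samples, if thresholds
`0 < u_n < v_n` satisfy `min{F(u_n), 1-F(v_n)}/√(log n / n) → ∞` where `F` is the unit
exponential CDF, then
`q_n^{(u_n,v_n)} = max_{1≤i≤n} max{min{v_n, X_(i)}, u_n} / max{min{v_n, Y_(i)}, u_n}`
converges in probability to `1`. -/
theorem stmt3 {Ω : Type*} [MeasurableSpace Ω] (μ : Measure Ω) [IsProbabilityMeasure μ]
    (X Y : ℕ → Ω → ℝ)
    (hmeas : ∀ j, Measurable (Sum.elim X Y j))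
    (hindep : iIndepFun (Sum.elim X Y) μ)
    (hX : ∀ i x, μ {ω | X i ω ≤ x} = ENNReal.ofReal (unitExpCDF x))
    (hY : ∀ i x, μ {ω | Y i ω ≤ x} = ENNReal.ofReal (unitExpCDF x))
    (u v : ℕ → ℝ)
    (huv : ∀ n : ℕ, 0 < u n ∧ u n < v n)
    (hcond : Tendsto (fun n : ℕ =>
      min (unitExpCDF (u n)) (1 - unitExpCDF (v n)) / Real.sqrt (Real.log n / n))
      atTop atTop) :
    TendstoInMeasure μ
      (fun n ω => ⨆ i : Fin n,
        max (min (v n) (orderStat n (fun j => X j ω) (i + 1))) (u n) /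
          max (min (v n) (orderStat n (fun j => Y j ω) (i + 1))) (u n))
      atTop (fun _ => (1 : ℝ)) := by
  rw [tendstoInMeasure_iff_measureReal_dist]
  intro ε hε
  refine squeeze_zero' (.of_forall fun _ => measureReal_nonneg) ?_
    (tendsto_const_div_atTop_nhds_zero_nat 4)
  filter_upwards [eventually_ge_atTop 2, hcond.eventually_ge_atTop (max 4 (4 * exp 1 / ε))]
    with n hn hK
  set m := min (unitExpCDF (u n)) (1 - unitExpCDF (v n))
  set δ := √(Real.log n / n)
  have hδ : 0 < δ := sqrt_pos.mpr (div_pos (Real.log_pos (by exact_mod_cast hn)) (by positivity))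
  have hKδ : max 4 (4 * exp 1 / ε) * δ ≤ m := (le_div_iff₀ hδ).mp hK
  have hm : 4 * δ ≤ m := (mul_le_mul_of_nonneg_right (le_max_left _ _) hδ.le).trans hKδ
  have hrate : exp 1 * (2 * δ) / m < ε := by
    have h := (mul_le_mul_of_nonneg_right (le_max_right _ _) hδ.le).trans hKδ
    rw [div_mul_eq_mul_div, div_le_iff₀ hε] at h
    rw [div_lt_iff₀ (by linarith)]
    linarith [mul_pos (exp_pos 1) hδ]
  calc _ ≤ 4 * n * exp (-2 * n * δ ^ 2) :=
        measureReal_le_dist_iSup_orderStat_div_le hmeas hindep hX hY (by omega) (huv n).2.le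
          (min_le_left _ _) (min_le_right _ _) hδ hm hrate
    _ = 4 / n := by
        rw [mul_assoc, natCast_mul_exp_neg_two_mul_sqrt_log_div_sq (by omega)]
        ring
end

section
/- Let {X_i, i = 1, ..., n} and {Y_i, i = 1, ..., n} be independent i.i.d. samples from the unit exponential distribution, with order statistics X_(1) ≤ ... ≤ X_(n) and Y_(1) ≤ ... ≤ Y_(n). Fix an arbitrary positive integer k and let Λ_r = {i ∈ ℕ : n - k + 1 ≤ i ≤ n}. Then q_{n,Λ_r} := max_{i ∈ Λ_r} X_(i)/Y_(i) converges in probability to 1 as n → ∞. -/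
open MeasureTheory ProbabilityTheory Filter Finset Real Topology ENNReal

/-!
Fix `ρ > 1`. By a union bound, all `n` samples lie below `ρ log n` except with probability
`n · n^(-ρ) → 0`. Cut the indices into `k` blocks of length `⌊n/k⌋`; by independence a block has
no sample above `ρ⁻¹ log n` with probability `(1 - n^(-1/ρ))^⌊n/k⌋ ≤ exp(-n^(1 - 1/ρ)/k + 1)`, so
with high probability every block has one, and then at least `k` samples exceed `ρ⁻¹ log n`.
On that event the top `k` order statistics of both samples lie in `[ρ⁻¹ log n, ρ log n]`, so every
ratio, and hence their maximum, lies in `[ρ⁻², ρ²]`.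
-/

lemma dist_ciSup_div_one_le {ι : Type*} [Finite ι] [Nonempty ι] {f g : ι → ℝ} {lo hi : ℝ}
    (hlo : 0 < lo) (hf : ∀ i, f i ∈ Set.Icc lo hi) (hg : ∀ i, g i ∈ Set.Icc lo hi) :
    dist (⨆ i, f i / g i) 1 ≤ hi / lo - 1 := by
  have hhi : 0 < hi := hlo.trans_le ((hf (Classical.arbitrary ι)).1.trans (hf _).2)
  have hratio : ∀ i, f i / g i ∈ Set.Icc (lo / hi) (hi / lo) := fun i =>
    ⟨div_le_div₀ (hlo.le.trans (hf i).1) (hf i).1 (hlo.trans_le (hg i).1) (hg i).2,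
      div_le_div₀ hhi.le (hf i).2 hlo (hg i).1⟩
  obtain ⟨i₀⟩ := ‹Nonempty ι›
  have hsup_le : (⨆ i, f i / g i) ≤ hi / lo := ciSup_le fun i => (hratio i).2
  have hle_sup : lo / hi ≤ ⨆ i, f i / g i :=
    (hratio i₀).1.trans (le_ciSup (Set.finite_range fun i => f i / g i).bddAbove i₀)
  -- `r + 1 / r ≥ 2` for `r = hi / lo`
  have hamgm : 1 - lo / hi ≤ hi / lo - 1 := by
    rw [div_sub_one hlo.ne', one_sub_div hhi.ne', div_le_div_iff₀ hhi hlo]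
    nlinarith [sq_nonneg (hi - lo)]
  rw [Real.dist_eq, abs_le]
  constructor <;> linarith

namespace OrderStat

variable (n : ℕ) (v : ℕ → ℝ)

noncomputable def sorted : List ℝ := (List.ofFn fun j : Fin n => v j).insertionSort (· ≤ ·)

lemma length_sorted : (sorted n v).length = n := by simp [sorted]

lemma sorted_perm : (sorted n v).Perm (List.ofFn fun j : Fin n => v j) :=
  List.perm_insertionSort _ _

lemma sorted_pairwise : (sorted n v).Pairwise (· ≤ ·) := List.pairwise_insertionSort _ _

lemma orderStat_eq_getElem {m : ℕ} (h1 : 1 ≤ m) (h2 : m ≤ n) :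
    orderStat n v m = (sorted n v)[m - 1]'(by rw [length_sorted]; omega) :=
  List.getD_eq_getElem _ _ _

end OrderStat

section OrderStatistics

open OrderStat

variable {n : ℕ} {v : ℕ → ℝ} {m : ℕ}

lemma orderStat_le_of_forall_le {x : ℝ} (h1 : 1 ≤ m) (h2 : m ≤ n) (h : ∀ j < n, v j ≤ x) :
    orderStat n v m ≤ x := by
  rw [orderStat_eq_getElem n v h1 h2]
  obtain ⟨j, hj⟩ := List.mem_ofFn.mp <| (sorted_perm n v).mem_iff.mp (List.getElem_mem _)
  exact hj ▸ h j j.isLt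

lemma orderStat_mono {a b : ℕ} (ha : 1 ≤ a) (hab : a ≤ b) (hb : b ≤ n) :
    orderStat n v a ≤ orderStat n v b := by
  rw [orderStat_eq_getElem n v ha (hab.trans hb), orderStat_eq_getElem n v (ha.trans hab) hb]
  exact (sorted_pairwise n v).rel_get_of_le (a := ⟨a - 1, _⟩) (b := ⟨b - 1, _⟩) (by simp; omega)

lemma le_orderStat_of_lt_card {y : ℝ} (h1 : 1 ≤ m) (h2 : m ≤ n)
    (h : n - m < #{j : Fin n | y ≤ v j}) : y ≤ orderStat n v m := by
  by_contra! hlt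
  have hcard : #{j : Fin n | y ≤ v j} = (sorted n v).countP (fun z => y ≤ z) := by
    rw [(sorted_perm n v).countP_eq, List.ofFn_eq_map, List.countP_map,
      List.countP_eq_length_filter]
    rfl
  -- the first `m` sorted values are at most `orderStat n v m < y`
  have htake : ((sorted n v).take m).countP (fun z => y ≤ z) = 0 := by
    rw [List.countP_eq_zero]
    intro z hz
    obtain ⟨i, hi, rfl⟩ := List.mem_iff_getElem.mp hz
    rw [List.length_take, length_sorted] at hi
    rw [List.getElem_take, decide_eq_true_eq, not_le]
    refine lt_of_le_of_lt ?_ (orderStat_eq_getElem n v h1 h2 ▸ hlt)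
    exact (sorted_pairwise n v).rel_get_of_le (a := ⟨i, _⟩) (b := ⟨m - 1, _⟩) (by simp; omega)
  have hdrop := List.countP_le_length (l := (sorted n v).drop m) (p := fun z => y ≤ z)
  rw [List.length_drop, length_sorted] at hdrop
  rw [← List.take_append_drop m (sorted n v), List.countP_append, htake] at hcard
  omega

lemma le_orderStat_of_forall_block {k b : ℕ} {y : ℝ} (hk : 0 < k) (hkb : k * b ≤ n)
    (h : ∀ t < k, ∃ j ∈ Ico (t * b) (t * b + b), y ≤ v j) : y ≤ orderStat n v (n - k + 1) := by
  -- the block index `j / b` of a witness `j` recovers its block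
  have hcard : k ≤ #{j : Fin n | y ≤ v j} := by
    simpa using card_le_card_of_surjOn (s := {j : Fin n | y ≤ v j}) (t := range k)
      (fun j => (j : ℕ) / b) fun t ht => by
        obtain ⟨j, hj, hyj⟩ := h t (mem_range.mp ht)
        rw [mem_Ico] at hj
        have hjn : j < n := by nlinarith [mem_range.mp ht]
        exact ⟨⟨j, hjn⟩, by simpa using hyj, Nat.div_eq_of_lt_le hj.1 (by linarith)⟩
  have hkn : k ≤ n := hcard.trans ((card_le_univ _).trans_eq (Fintype.card_fin n))
  exact le_orderStat_of_lt_card (by omega) (by omega) (by omega)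

lemma orderStat_sub_mem_Icc {k i : ℕ} {lo hi : ℝ} (hik : i < k) (hkn : k ≤ n)
    (hle : ∀ j < n, v j ≤ hi)
    (hblock : ∀ t < k, ∃ j ∈ Ico (t * (n / k)) (t * (n / k) + n / k), lo ≤ v j) :
    orderStat n v (n - i) ∈ Set.Icc lo hi :=
  ⟨(le_orderStat_of_forall_block (by omega) (Nat.mul_div_le n k) hblock).trans
    (orderStat_mono (by omega) (by omega) (by omega)),
   orderStat_le_of_forall_le (by omega) (by omega) hle⟩

end OrderStatistics

lemma tendsto_natCast_mul_rpow_neg {c : ℝ} (hc : 1 < c) :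
    Tendsto (fun n : ℕ => (n : ℝ) * (n : ℝ) ^ (-c)) atTop (𝓝 0) := by
  refine ((tendsto_rpow_neg_atTop (sub_pos.mpr hc)).comp tendsto_natCast_atTop_atTop).congr' ?_
  filter_upwards [eventually_ge_atTop 1] with n hn
  have hn : (0 : ℝ) < n := by exact_mod_cast hn
  rw [Function.comp_apply, neg_sub, sub_eq_add_neg, rpow_add hn, Real.rpow_one]

lemma natCast_rpow_neg_le_one {c : ℝ} (hc : 0 ≤ c) {n : ℕ} (hn : 1 ≤ n) : (n : ℝ) ^ (-c) ≤ 1 :=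
  rpow_le_one_of_one_le_of_nonpos (by exact_mod_cast hn) (by linarith)

lemma one_sub_rpow_neg_pow_div_le {c : ℝ} (hc : 0 ≤ c) {n k : ℕ} (hn : 1 ≤ n) (hk : 0 < k) :
    (1 - (n : ℝ) ^ (-c)) ^ (n / k) ≤ exp (1 - (n : ℝ) ^ (1 - c) / k) := by
  have hn' : (0 : ℝ) < n := by exact_mod_cast hn
  have hk' : (0 : ℝ) < k := by exact_mod_cast hk
  set p := (n : ℝ) ^ (-c)
  have hp0 : 0 ≤ p := rpow_nonneg hn'.le _
  have hfloor : (n : ℝ) / k - 1 ≤ (n / k : ℕ) := by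
    rw [div_sub_one hk'.ne', div_le_iff₀ hk', sub_le_iff_le_add]
    exact_mod_cast (Nat.lt_div_mul_add (a := n) hk).le
  have hpn : p * n = (n : ℝ) ^ (1 - c) := by
    rw [sub_eq_neg_add, rpow_add hn', Real.rpow_one]
  have hexponent : (n / k : ℕ) * -p ≤ 1 - (n : ℝ) ^ (1 - c) / k := by
    have := mul_le_mul_of_nonneg_left hfloor hp0
    rw [mul_sub, mul_one, ← mul_div_assoc, hpn] at this
    linarith [natCast_rpow_neg_le_one hc hn]
  calc (1 - p) ^ (n / k) ≤ exp (-p) ^ (n / k) :=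
        pow_le_pow_left₀ (sub_nonneg.mpr (natCast_rpow_neg_le_one hc hn)) (one_sub_le_exp_neg p) _
    _ = exp ((n / k : ℕ) * -p) := (exp_nat_mul _ _).symm
    _ ≤ exp (1 - (n : ℝ) ^ (1 - c) / k) := exp_le_exp.mpr hexponent

lemma tendsto_mul_one_sub_rpow_neg_pow_div {c : ℝ} (hc0 : 0 ≤ c) (hc1 : c < 1) {k : ℕ}
    (hk : 0 < k) :
    Tendsto (fun n : ℕ => (k : ℝ) * (1 - (n : ℝ) ^ (-c)) ^ (n / k)) atTop (𝓝 0) := by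
  have hdom : Tendsto (fun n : ℕ => (k : ℝ) * exp (1 - (n : ℝ) ^ (1 - c) / k)) atTop (𝓝 0) := by
    have h := ((tendsto_rpow_atTop (sub_pos.mpr hc1)).comp
      tendsto_natCast_atTop_atTop).atTop_div_const (by exact_mod_cast hk : (0 : ℝ) < k)
    simpa [sub_eq_add_neg] using (tendsto_exp_atBot.comp
      (tendsto_atBot_add_const_left _ 1 (tendsto_neg_atTop_atBot.comp h))).const_mul (k : ℝ)
  refine squeeze_zero' ((eventually_ge_atTop 1).mono fun n hn => ?_)
    ((eventually_ge_atTop 1).mono fun n hn => ?_) hdom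
  · exact mul_nonneg k.cast_nonneg (pow_nonneg (sub_nonneg.mpr (natCast_rpow_neg_le_one hc0 hn)) _)
  · gcongr
    exact one_sub_rpow_neg_pow_div_le hc0 hn hk

-- `n · P(X > ρ log n) + k · P(X ≤ ρ⁻¹ log n) ^ ⌊n/k⌋` for unit exponential `X`
noncomputable def tailBound (ρ : ℝ) (k n : ℕ) : ℝ :=
  n * (n : ℝ) ^ (-ρ) + k * (1 - (n : ℝ) ^ (-ρ⁻¹)) ^ (n / k)

lemma tendsto_tailBound {ρ : ℝ} (hρ : 1 < ρ) {k : ℕ} (hk : 0 < k) :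
    Tendsto (tailBound ρ k) atTop (𝓝 0) := by
  have h := (tendsto_natCast_mul_rpow_neg hρ).add
    (tendsto_mul_one_sub_rpow_neg_pow_div (inv_nonneg.mpr (by linarith))
      (inv_lt_one_of_one_lt₀ hρ) hk)
  rw [add_zero] at h
  exact h

section UnitExponential

variable {Ω : Type*} [MeasurableSpace Ω] {μ : Measure Ω}

lemma measure_lt_eq_of_unitExpCDF [IsProbabilityMeasure μ] {V : Ω → ℝ} (hV : Measurable V)
    (hcdf : ∀ x, μ {ω | V ω ≤ x} = ENNReal.ofReal (unitExpCDF x)) {x : ℝ} (hx : 0 ≤ x) :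
    μ {ω | x < V ω} = ENNReal.ofReal (exp (-x)) := by
  have hcompl : {ω | x < V ω} = {ω | V ω ≤ x}ᶜ := by ext; simp
  rw [hcompl, prob_compl_eq_one_sub (measurableSet_le hV measurable_const), hcdf, unitExpCDF,
    if_pos hx, ← ENNReal.ofReal_one,
    ← ENNReal.ofReal_sub _ (sub_nonneg.mpr (exp_le_one_iff.mpr (by linarith))),
    _root_.sub_sub_cancel]

variable {W : ℕ → Ω → ℝ}

lemma measure_biInter_le_eq_of_unitExpCDF (hindep : iIndepFun W μ)
    (hcdf : ∀ i x, μ {ω | W i ω ≤ x} = ENNReal.ofReal (unitExpCDF x)) (S : Finset ℕ) {y : ℝ}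
    (hy : 0 ≤ y) :
    μ (⋂ j ∈ S, {ω | W j ω ≤ y}) = ENNReal.ofReal (1 - exp (-y)) ^ #S := by
  have := hindep.measure_inter_preimage_eq_mul S (sets := fun _ => Set.Iic y)
    fun _ _ => measurableSet_Iic
  simpa only [Set.preimage, Set.mem_Iic, hcdf, unitExpCDF, if_pos hy, prod_const] using this

lemma measure_exists_orderStat_notMem_Icc_le [IsProbabilityMeasure μ]
    (hmeas : ∀ j, Measurable (W j)) (hindep : iIndepFun W μ)
    (hcdf : ∀ i x, μ {ω | W i ω ≤ x} = ENNReal.ofReal (unitExpCDF x))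
    {n k : ℕ} (hkn : k ≤ n) {lo hi : ℝ} (hlo : 0 ≤ lo) (hhi : 0 ≤ hi) :
    μ {ω | ∃ i : Fin k, orderStat n (fun j => W j ω) (n - i) ∉ Set.Icc lo hi}
      ≤ ENNReal.ofReal (n * exp (-hi) + k * (1 - exp (-lo)) ^ (n / k)) := by
  set b := n / k
  have hsub : {ω | ∃ i : Fin k, orderStat n (fun j => W j ω) (n - i) ∉ Set.Icc lo hi}
      ⊆ (⋃ j ∈ range n, {ω | hi < W j ω})
        ∪ ⋃ t ∈ range k, ⋂ j ∈ Ico (t * b) (t * b + b), {ω | W j ω ≤ lo} := by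
    rintro ω ⟨i, hω⟩
    by_contra hgood
    simp only [Set.mem_union, Set.mem_iUnion, Set.mem_iInter, Set.mem_ofPred_eq, mem_range,
      not_or, not_exists, not_forall, not_lt, not_le] at hgood
    exact hω (orderStat_sub_mem_Icc i.isLt hkn hgood.1
      fun t ht => (hgood.2 t ht).imp fun j ⟨hj, hlt⟩ => ⟨hj, hlt.le⟩)
  calc _ ≤ _ := measure_mono hsub
    _ ≤ _ := measure_union_le _ _
    _ ≤ ∑ j ∈ range n, μ {ω | hi < W j ω}
          + ∑ t ∈ range k, μ (⋂ j ∈ Ico (t * b) (t * b + b), {ω | W j ω ≤ lo}) :=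
        add_le_add (measure_biUnion_finset_le _ _) (measure_biUnion_finset_le _ _)
    _ = _ := by
      simp only [measure_lt_eq_of_unitExpCDF (hmeas _) (hcdf _) hhi,
        measure_biInter_le_eq_of_unitExpCDF hindep hcdf _ hlo, sum_const, card_range,
        Nat.card_Ico, Nat.add_sub_cancel_left, nsmul_eq_mul]
      have hexp : 0 ≤ 1 - exp (-lo) := sub_nonneg.mpr (exp_le_one_iff.mpr (by linarith))
      rw [ENNReal.ofReal_add (by positivity) (by positivity), ENNReal.ofReal_mul (by positivity),
        ENNReal.ofReal_mul (by positivity), ENNReal.ofReal_pow hexp, ENNReal.ofReal_natCast,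
        ENNReal.ofReal_natCast]

lemma measure_exists_orderStat_notMem_Icc_log_le [IsProbabilityMeasure μ]
    (hmeas : ∀ j, Measurable (W j)) (hindep : iIndepFun W μ)
    (hcdf : ∀ i x, μ {ω | W i ω ≤ x} = ENNReal.ofReal (unitExpCDF x))
    {ρ : ℝ} (hρ : 1 < ρ) {n k : ℕ} (hn : 2 ≤ n) (hkn : k ≤ n) :
    μ {ω | ∃ i : Fin k,
        orderStat n (fun j => W j ω) (n - i) ∉ Set.Icc (ρ⁻¹ * Real.log n) (ρ * Real.log n)}
      ≤ ENNReal.ofReal (tailBound ρ k n) := by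
  have hn1 : (1 : ℝ) < n := by exact_mod_cast hn
  have hlog : 0 < Real.log n := Real.log_pos hn1
  have hexp : ∀ c, exp (-(c * Real.log n)) = (n : ℝ) ^ (-c) := fun c => by
    rw [rpow_def_of_pos (by linarith)]; ring_nf
  refine (measure_exists_orderStat_notMem_Icc_le hmeas hindep hcdf hkn (by positivity)
    (by positivity)).trans_eq ?_
  rw [hexp, hexp, tailBound]

end UnitExponential

/-- For independent i.i.d. unit exponential samples and a fixed
positive integer `k`, the maximum ranked quotient over the right index set
`Λ_r = {i : n-k+1 ≤ i ≤ n}`, i.e. `max_{i ∈ Λ_r} X_(i)/Y_(i)`, converges in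
probability to `1` as `n → ∞`. -/
theorem stmt4 {Ω : Type*} [MeasurableSpace Ω] (μ : Measure Ω) [IsProbabilityMeasure μ]
    (X Y : ℕ → Ω → ℝ)
    (hmeas : ∀ j, Measurable (Sum.elim X Y j))
    (hindep : iIndepFun (Sum.elim X Y) μ)
    (hX : ∀ i x, μ {ω | X i ω ≤ x} = ENNReal.ofReal (unitExpCDF x))
    (hY : ∀ i x, μ {ω | Y i ω ≤ x} = ENNReal.ofReal (unitExpCDF x))
    (k : ℕ) (hk : 0 < k) :
    TendstoInMeasure μ
      (fun n ω => ⨆ i : Fin k,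
        orderStat n (fun j => X j ω) (n - i) / orderStat n (fun j => Y j ω) (n - i))
      atTop (fun _ => (1 : ℝ)) := by
  have hindepX : iIndepFun X μ := hindep.precomp (g := Sum.inl) Sum.inl_injective
  have hindepY : iIndepFun Y μ := hindep.precomp (g := Sum.inr) Sum.inr_injective
  have : Nonempty (Fin k) := ⟨⟨0, hk⟩⟩
  rw [tendstoInMeasure_iff_dist]
  intro ε hε
  obtain ⟨ρ, hρ, hρε⟩ : ∃ ρ : ℝ, 1 < ρ ∧ ρ ^ 2 - 1 < ε :=
    ⟨√(1 + ε / 2), lt_sqrt_of_sq_lt (by linarith), by rw [sq_sqrt (by linarith)]; linarith⟩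
  have hB := ENNReal.tendsto_ofReal (tendsto_tailBound hρ hk)
  refine tendsto_of_tendsto_of_tendsto_of_le_of_le' tendsto_const_nhds
    (by simpa using hB.add hB) (.of_forall fun _ => zero_le) ?_
  filter_upwards [eventually_ge_atTop (max 2 k)] with n hn
  have hlog : 0 < Real.log n := Real.log_pos (by norm_cast; omega)
  have hlo : 0 < ρ⁻¹ * Real.log n := by positivity
  have hratio : ρ * Real.log n / (ρ⁻¹ * Real.log n) = ρ ^ 2 := by field_simp
  calc _ ≤ μ ({ω | ∃ i : Fin k, orderStat n (fun j => X j ω) (n - i)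
            ∉ Set.Icc (ρ⁻¹ * Real.log n) (ρ * Real.log n)}
        ∪ {ω | ∃ i : Fin k, orderStat n (fun j => Y j ω) (n - i)
            ∉ Set.Icc (ρ⁻¹ * Real.log n) (ρ * Real.log n)}) :=
        measure_mono fun ω hω => by
          by_contra hgood
          simp only [Set.mem_union, Set.mem_ofPred_eq, not_or, not_exists, not_not] at hgood hω
          linarith [dist_ciSup_div_one_le hlo hgood.1 hgood.2]
    _ ≤ _ := measure_union_le _ _
    _ ≤ _ := add_le_add
        (measure_exists_orderStat_notMem_Icc_log_le (fun j => hmeas (.inl j)) hindepX hX hρ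
          (by omega) (by omega))
        (measure_exists_orderStat_notMem_Icc_log_le (fun j => hmeas (.inr j)) hindepY hY hρ
          (by omega) (by omega))
end

section
/- For any positive reals c_1, ..., c_n, the integral of exp(-c_1 y_1 - ... - c_n y_n) over the region {0 < y_1 < y_2 < ... < y_n} ⊂ ℝ^n equals 1/[c_n · (c_n + c_{n-1}) · ... · (c_n + c_{n-1} + ... + c_1)], i.e., the product over j = 1, ..., n of 1/(Σ_{i=j}^{n} c_i). -/
open MeasureTheory Finset

/-!
Substitute `y = cumsum t`, i.e. `y_j = t_1 + ⋯ + t_j`. This linear map is lower unitriangular,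
hence preserves Lebesgue measure, and it maps the positive orthant `{t | ∀ i, 0 < t i}` onto the
simplex. After the substitution the exponent becomes `∑_i (∑_{j ≥ i} c_j) t_i`, so the integrand
is a product of one-variable functions and the integral factors into
`∏_i ∫_0^∞ exp(-(∑_{j ≥ i} c_j) t) dt = ∏_i (∑_{j ≥ i} c_j)⁻¹`.
-/

noncomputable def cumsum (n : ℕ) : (Fin n → ℝ) →ₗ[ℝ] (Fin n → ℝ) where
  toFun t j := ∑ i ∈ Iic j, t i
  map_add' t s := by ext j; simp [sum_add_distrib]
  map_smul' r t := by ext j; simp [mul_sum]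

section cumsum

variable {n : ℕ}

lemma cumsum_apply (t : Fin n → ℝ) (j : Fin n) : cumsum n t j = ∑ i ∈ Iic j, t i := rfl

lemma det_cumsum : LinearMap.det (cumsum n) = 1 := by
  have hentry (i j : Fin n) : LinearMap.toMatrix' (cumsum n) i j = if j ≤ i then 1 else 0 := by
    simp [LinearMap.toMatrix'_apply, cumsum_apply, Pi.single_apply]
  have hlower : (LinearMap.toMatrix' (cumsum n)).IsLowerTriangular :=
    fun i j hij => by simpa [hentry] using hij
  rw [← LinearMap.det_toMatrix', Matrix.det_of_isLowerTriangular _ hlower]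
  exact prod_eq_one fun i _ => by simp [hentry]

lemma measurePreserving_cumsum : MeasurePreserving (cumsum n) := by
  refine ⟨(cumsum n).continuous_of_finiteDimensional.measurable, ?_⟩
  rw [Real.map_linearMap_volume_pi_eq_smul_volume_pi (by simp [det_cumsum]), det_cumsum]
  simp

lemma measurableEmbedding_cumsum : MeasurableEmbedding (cumsum n) :=
  (((cumsum n).equivOfDetNeZero (by simp [det_cumsum])).toContinuousLinearEquiv.toHomeomorph
    ).measurableEmbedding

lemma cumsum_apply_zero (t : Fin (n + 1) → ℝ) : cumsum (n + 1) t 0 = t 0 := by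
  simp [cumsum_apply, ← bot_eq_zero]

lemma cumsum_apply_succ (t : Fin (n + 1) → ℝ) (j : Fin n) :
    cumsum (n + 1) t j.succ = cumsum (n + 1) t j.castSucc + t j.succ := by
  have hIic : Iic j.succ = insert j.succ (Iic j.castSucc) := by
    ext k
    simp only [mem_Iic, mem_insert, Fin.le_def, Fin.ext_iff, Fin.val_succ, Fin.val_castSucc]
    omega
  rw [cumsum_apply, hIic, sum_insert (by simp [Fin.le_castSucc_iff]), add_comm, cumsum_apply]

lemma preimage_cumsum_simplex :
    cumsum n ⁻¹' {y | (∀ i, 0 < y i) ∧ StrictMono y} = Set.univ.pi fun _ => Set.Ioi 0 := by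
  ext t
  simp only [Set.mem_preimage, Set.mem_univ_pi, Set.mem_Ioi]
  constructor
  · rintro ⟨hpos, hmono⟩ i
    cases n with
    | zero => exact i.elim0
    | succ n =>
      rcases Fin.eq_zero_or_eq_succ i with rfl | ⟨j, rfl⟩
      · simpa [cumsum_apply_zero] using hpos 0
      · linarith [cumsum_apply_succ t j ▸ hmono (Fin.castSucc_lt_succ (i := j))]
  · intro ht
    refine ⟨fun j => sum_pos (fun i _ => ht i) ⟨j, mem_Iic.2 le_rfl⟩, ?_⟩
    cases n with
    | zero => exact Subsingleton.strictMono _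
    | succ n =>
      exact Fin.strictMono_iff_lt_succ.2 fun j => by linarith [cumsum_apply_succ t j, ht j.succ]

lemma sum_mul_cumsum (c t : Fin n → ℝ) :
    ∑ j, c j * cumsum n t j = ∑ i, (∑ j ∈ Ici i, c j) * t i := by
  simp only [cumsum_apply, mul_sum, sum_mul]
  exact sum_comm' fun j i => by simp

end cumsum

lemma setIntegral_univ_pi_prod {ι 𝕜 : Type*} [Fintype ι] [RCLike 𝕜] {E : ι → Type*}
    [∀ i, MeasureSpace (E i)] [∀ i, SigmaFinite (volume : Measure (E i))]
    (s : (i : ι) → Set (E i)) (f : (i : ι) → E i → 𝕜) :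
    ∫ x in Set.univ.pi s, ∏ i, f i (x i) = ∏ i, ∫ x in s i, f i x := by
  rw [volume_pi, Measure.restrict_pi_pi, integral_fintype_prod_eq_prod]

lemma integral_exp_neg_mul_Ioi_zero {d : ℝ} (hd : 0 < d) :
    ∫ x in Set.Ioi 0, Real.exp (-(d * x)) = d⁻¹ := by
  simpa [neg_mul, div_neg, neg_div] using integral_exp_mul_Ioi (neg_lt_zero.2 hd) 0

theorem stmt10_general (n : ℕ) (c : Fin n → ℝ) (hc : ∀ i, 0 < c i) :
    ∫ y in {y : Fin n → ℝ | (∀ i, 0 < y i) ∧ StrictMono y},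
        Real.exp (-∑ i, c i * y i) =
      ∏ j : Fin n, (∑ i ∈ Finset.Ici j, c i)⁻¹ := by
  have hexp (t : Fin n → ℝ) : Real.exp (-∑ i, c i * cumsum n t i) =
      ∏ i, Real.exp (-((∑ j ∈ Ici i, c j) * t i)) := by
    rw [sum_mul_cumsum, ← Real.exp_sum, sum_neg_distrib]
  rw [← measurePreserving_cumsum.setIntegral_preimage_emb measurableEmbedding_cumsum,
    preimage_cumsum_simplex]
  simp_rw [hexp]
  rw [setIntegral_univ_pi_prod _ fun i x => Real.exp (-((∑ j ∈ Ici i, c j) * x))]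
  exact prod_congr rfl fun i _ =>
    integral_exp_neg_mul_Ioi_zero (sum_pos (fun j _ => hc j) ⟨i, mem_Ici.2 le_rfl⟩)

/-- For positive reals `c_1, …, c_n`, the integral of
`exp(-c_1 y_1 - ⋯ - c_n y_n)` over the open simplex `{0 < y_1 < y_2 < ⋯ < y_n}`
equals `∏_{j=1}^n 1/(∑_{i=j}^n c_i)`. -/
theorem stmt10 (n : ℕ) (hn : 0 < n) (c : Fin n → ℝ) (hc : ∀ i, 0 < c i) :
    ∫ y in {y : Fin n → ℝ | (∀ i, 0 < y i) ∧ StrictMono y},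
        Real.exp (-∑ i, c i * y i) =
      ∏ j : Fin n, (∑ i ∈ Finset.Ici j, c i)⁻¹ :=
  stmt10_general n c hc
end

section
/- For integers m ≥ 1, n ≥ 0, define the Catalan trapezoid entries C_m(n, x) by: C_m(n, x) = binom(n + x, x) if 0 ≤ x < m; C_m(n, x) = binom(n + x, x) − binom(n + x, x − m) if m ≤ x ≤ n + m − 1; and C_m(n, x) = 0 if x > n + m − 1. Then for integers m, b, a with the relevant indices valid: (i) if a ≥ b − m, then C_{b-m+2}(m−3, a) + C_{b-m+1}(m−3, a−1) + ... + C_2(m−3, a−b+m) = C_{b-m+1}(m−2, a); (ii) if a < b − m, then C_{b-m+2}(m−3, a) + C_{b-m+1}(m−3, a−1) + ... + C_{b-a-m+2}(m−3, 0) = C_{b-m+1}(m−2, a). In other words, Σ_{i} C_{b-m+2-i}(m−3, a−i) = C_{b-m+1}(m−2, a), where the sum runs over i = 0, ..., b−m in case (i) and over i = 0, ..., a in case (ii). -/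
/-- The Catalan trapezoid of order `m`: `C_m(n,x) = C(n+x,x)` for `0 ≤ x < m`,
`C_m(n,x) = C(n+x,x) - C(n+x,x-m)` for `m ≤ x ≤ n+m-1`, and `0` for `x > n+m-1`. -/
def catalanTrap (m n x : ℕ) : ℤ :=
  if x < m then (n + x).choose x
  else if x ≤ n + m - 1 then ((n + x).choose x : ℤ) - (n + x).choose (x - m)
  else 0

/-- Binomial coefficient with integer lower index, zero when negative. -/
def ch (N : ℕ) (j : ℤ) : ℤ := if 0 ≤ j then (N.choose j.toNat : ℤ) else 0

lemma ch_neg (N : ℕ) {j : ℤ} (h : j < 0) : ch N j = 0 := by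
  simp [ch, not_le.2 h]

lemma ch_nat (N x : ℕ) : ch N (x : ℤ) = N.choose x := by
  simp [ch]

lemma ch_pascal (N : ℕ) (j : ℤ) : ch (N + 1) j = ch N j + ch N (j - 1) := by
  unfold ch
  rcases lt_trichotomy j 0 with h | h | h
  · rw [if_neg (not_le.2 h), if_neg (not_le.2 h), if_neg (not_le.2 (by omega : j - 1 < 0))]
    ring
  · subst h; simp
  · have h1 : (0:ℤ) ≤ j := le_of_lt h
    have h2 : (0:ℤ) ≤ j - 1 := by omega
    rw [if_pos h1, if_pos h1, if_pos h2]
    have hj : j.toNat = (j - 1).toNat + 1 := by omega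
    rw [hj, Nat.choose_succ_succ]
    push_cast; ring

/-- Hockey stick along the diagonal. -/
lemma hs1 (n : ℕ) : ∀ k a : ℕ, k ≤ a →
    ∑ i ∈ Finset.range (k + 1), ch (n + a - i) ((a : ℤ) - i) =
      ch (n + a + 1) (a : ℤ) - ch (n + a - k) ((a : ℤ) - k - 1) := by
  intro k
  induction k with
  | zero =>
      intro a _
      simp only [zero_add, Finset.sum_range_one, Nat.sub_zero, Nat.cast_zero, sub_zero]
      have := ch_pascal (n + a) (a : ℤ)
      omega
  | succ k ih =>
      intro a ha
      rw [Finset.sum_range_succ, ih a (by omega)]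
      have hN : n + a - k = (n + a - (k + 1)) + 1 := by omega
      have := ch_pascal (n + a - (k + 1)) ((a : ℤ) - k - 1)
      rw [hN]
      have harg : (a : ℤ) - ↑(k + 1) = (a : ℤ) - k - 1 := by push_cast; ring
      rw [harg]
      omega

/-- Hockey stick along a column. -/
lemma hs2 (n : ℕ) (c : ℤ) : ∀ k a : ℕ, k ≤ a →
    ∑ i ∈ Finset.range (k + 1), ch (n + a - i) c =
      ch (n + a + 1) (c + 1) - ch (n + a - k) (c + 1) := by
  intro k
  induction k with
  | zero =>
      intro a _
      simp only [zero_add, Finset.sum_range_one, Nat.sub_zero]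
      have := ch_pascal (n + a) (c + 1)
      simp only [add_sub_cancel_right] at this
      omega
  | succ k ih =>
      intro a ha
      rw [Finset.sum_range_succ, ih a (by omega)]
      have hN : n + a - k = (n + a - (k + 1)) + 1 := by omega
      have := ch_pascal (n + a - (k + 1)) (c + 1)
      simp only [add_sub_cancel_right] at this
      rw [hN]
      omega

lemma trap_eq_ch (m n x : ℕ) (hm : 1 ≤ m) (hx : x ≤ n + m) :
    catalanTrap m n x = ch (n + x) (x : ℤ) - ch (n + x) ((x : ℤ) - m) := by
  unfold catalanTrap
  rw [ch_nat]
  split_ifs with h1 h2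
  · rw [ch_neg (n + x) (by omega : (x : ℤ) - m < 0)]; ring
  · have h3 : (0:ℤ) ≤ (x : ℤ) - m := by omega
    have h4 : ((x : ℤ) - m).toNat = x - m := by omega
    rw [ch, if_pos h3, h4]
  · -- x = n + m
    have hx' : x = n + m := by omega
    have h3 : (0:ℤ) ≤ (x : ℤ) - m := by omega
    have h4 : ((x : ℤ) - m).toNat = x - m := by omega
    rw [ch, if_pos h3, h4]
    have hsym : (n + x).choose (x - m) = (n + x).choose x := by
      have h5 : x - m = (n + x) - x := by omega
      calc (n + x).choose (x - m) = (n + x).choose ((n + x) - x) := by rw [h5]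
        _ = (n + x).choose x := Nat.choose_symm (by omega)
    omega

lemma trap_zero (m n x : ℕ) (hx : n + m < x) : catalanTrap m n x = 0 := by
  unfold catalanTrap
  rw [if_neg (by omega), if_neg (by omega)]

lemma main_lemma (n k a : ℕ) :
    (k ≤ a → ∑ i ∈ Finset.range (k + 1), catalanTrap (k + 2 - i) n (a - i) =
        catalanTrap (k + 1) (n + 1) a) ∧
    (a < k → ∑ i ∈ Finset.range (a + 1), catalanTrap (k + 2 - i) n (a - i) =
        catalanTrap (k + 1) (n + 1) a) := by
  constructor
  · intro hka
    by_cases hbig : n + k + 2 < a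
    · -- everything vanishes
      rw [trap_zero (k + 1) (n + 1) a (by omega)]
      apply Finset.sum_eq_zero
      intro i hi
      rw [Finset.mem_range] at hi
      exact trap_zero (k + 2 - i) n (a - i) (by omega)
    · push_neg at hbig
      have hstep : ∀ i ∈ Finset.range (k + 1),
          catalanTrap (k + 2 - i) n (a - i) =
            ch (n + a - i) ((a : ℤ) - i) - ch (n + a - i) ((a : ℤ) - k - 2) := by
        intro i hi
        rw [Finset.mem_range] at hi
        rw [trap_eq_ch (k + 2 - i) n (a - i) (by omega) (by omega)]
        have e1 : n + (a - i) = n + a - i := by omega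
        have e2 : ((a - i : ℕ) : ℤ) = (a : ℤ) - i := by omega
        have e3 : ((a - i : ℕ) : ℤ) - ((k + 2 - i : ℕ) : ℤ) = (a : ℤ) - k - 2 := by omega
        rw [e1, e3, e2]
      rw [Finset.sum_congr rfl hstep, Finset.sum_sub_distrib,
        hs1 n k a hka, hs2 n ((a : ℤ) - k - 2) k a hka,
        trap_eq_ch (k + 1) (n + 1) a (by omega) (by omega)]
      have e4 : n + 1 + a = n + a + 1 := by omega
      have e5 : (a : ℤ) - k - 2 + 1 = (a : ℤ) - k - 1 := by ring
      have e6 : (a : ℤ) - ((k : ℤ) + 1) = (a : ℤ) - k - 1 := by ring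
      rw [e4, e5]
      push_cast
      rw [e6]
      ring
  · intro hak
    have hstep : ∀ i ∈ Finset.range (a + 1),
        catalanTrap (k + 2 - i) n (a - i) = ch (n + a - i) ((a : ℤ) - i) := by
      intro i hi
      rw [Finset.mem_range] at hi
      rw [trap_eq_ch (k + 2 - i) n (a - i) (by omega) (by omega)]
      have e1 : n + (a - i) = n + a - i := by omega
      have e2 : ((a - i : ℕ) : ℤ) = (a : ℤ) - i := by omega
      rw [e1, e2, ch_neg (n + a - i) (by omega : ((a : ℤ) - i) - ((k + 2 - i : ℕ) : ℤ) < 0)]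
      ring
    rw [Finset.sum_congr rfl hstep, hs1 n a a le_rfl,
      ch_neg (n + a - a) (by omega : (a : ℤ) - a - 1 < 0),
      trap_eq_ch (k + 1) (n + 1) a (by omega) (by omega),
      ch_neg (n + 1 + a) (by push_cast; omega : (a : ℤ) - ((k + 1 : ℕ) : ℤ) < 0)]
    have e4 : n + 1 + a = n + a + 1 := by omega
    rw [e4]

/-- For integers `m ≥ 3`, `b ≥ m` and `a ≥ 0`:
(i) if `a ≥ b - m` then
`∑_{i=0}^{b-m} C_{b-m+2-i}(m-3, a-i) = C_{b-m+1}(m-2, a)`;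
(ii) if `a < b - m` then
`∑_{i=0}^{a} C_{b-m+2-i}(m-3, a-i) = C_{b-m+1}(m-2, a)`. -/
theorem stmt15 (m b a : ℕ) (hm : 3 ≤ m) (hb : m ≤ b) :
    (b - m ≤ a →
      ∑ i ∈ Finset.range (b - m + 1), catalanTrap (b - m + 2 - i) (m - 3) (a - i) =
        catalanTrap (b - m + 1) (m - 2) a) ∧
    (a < b - m →
      ∑ i ∈ Finset.range (a + 1), catalanTrap (b - m + 2 - i) (m - 3) (a - i) =
        catalanTrap (b - m + 1) (m - 2) a) := by
  have h2 : m - 2 = (m - 3) + 1 := by omega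
  rw [h2]
  exact main_lemma (m - 3) (b - m) a
end

section
/- Let Y_(1) ≤ Y_(2) ≤ ... ≤ Y_(n) be the order statistics of n i.i.d. unit Fréchet random variables, let t > 0, and let 0 < x_1 ≤ x_2 ≤ ... ≤ x_n be positive reals. Define f_n(t, x_1, ..., x_n) = P(Y_(1) ≤ t·x_1, Y_(2) ≤ t·x_2, ..., Y_(n) ≤ t·x_n), with f_0(t) = 1. Then f_n satisfies the recursion f_n(t, x_1, ..., x_n) = Σ_{i=1}^{n} binom(n, i) · (−1)^{i+1} · e^{−i/(t·x_{n−i+1})} · f_{n−i}(t, x_1, ..., x_{n−i}). -/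
/-!
Put `a k = t x_k`. The `k`-th order statistic is `≤ a k` iff at least `k` of the variables are
`≤ a k`. For `S ⊆ {0, …, n-1}` let `E_S` be the event that the variables indexed by `S` are
`≤ a (n - |S| + 1)` while the remaining `n - |S|` satisfy the order-statistic bounds. Pointwise,
`∑_S (-1)^|S| 1_{E_S} = 0`: if `m` indexes the largest value and `m ∉ S`, then `E_S` and
`E_{S ∪ {m}}` hold simultaneously, because both say exactly that `Y_m ≤ a (n - |S|)` and the variables
outside `S ∪ {m}` satisfy the bounds (as `a` is nondecreasing). By independence and
exchangeability `P(E_S) = F(a (n - |S| + 1))^|S| f_{n-|S|}`; grouping by `|S|` and isolating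
`S = ∅`, whose term is `f_n`, gives the recursion.
-/

open MeasureTheory ProbabilityTheory Filter Finset Real Topology ENNReal

/-- The cumulative distribution function of the unit Fréchet distribution:
`F(x) = exp(-1/x)` for `x > 0` and `0` otherwise. -/
noncomputable def frechetCDF (x : ℝ) : ℝ := if 0 < x then Real.exp (-x⁻¹) else 0

theorem List.Pairwise.getElem_le_iff_lt_countP {α : Type*} [LinearOrder α] {l : List α}
    (hl : l.Pairwise (· ≤ ·)) {i : ℕ} (hi : i < l.length) (c : α) :
    l[i] ≤ c ↔ i < l.countP (· ≤ c) := by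
  induction l generalizing i with
  | nil => simp at hi
  | cons x l ih =>
    rw [List.pairwise_cons] at hl
    by_cases hx : x ≤ c
    · cases i with
      | zero => simp [hx]
      | succ i => simp [hx, ih hl.2 (Nat.lt_of_succ_lt_succ hi)]
    · have hxi : x ≤ (x :: l)[i] := by
        cases i with
        | zero => exact le_rfl
        | succ i => exact hl.1 _ (List.getElem_mem _)
      have hl0 : l.countP (· ≤ c) = 0 :=
        List.countP_eq_zero.2 fun y hy hyc => hx ((hl.1 y hy).trans (by simpa using hyc))
      simp only [List.countP_cons, hl0, hx, decide_false, Bool.false_eq_true, ↓reduceIte,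
        add_zero, Nat.not_lt_zero, iff_false, not_le]
      exact (not_le.1 hx).trans_le hxi

noncomputable def countLE {α : Type*} (T : Finset α) (v : α → ℝ) (c : ℝ) : ℕ :=
  #{j ∈ T | v j ≤ c}

/-- The bounds `v_(k) ≤ a k`, `1 ≤ k ≤ #T`, on the order statistics of `(v j)_{j ∈ T}`. -/
def OrderStatsLE {α : Type*} (T : Finset α) (v : α → ℝ) (a : ℕ → ℝ) : Prop :=
  ∀ k ∈ Icc 1 #T, k ≤ countLE T v (a k)

theorem countLE_map {α β : Type*} (e : β ↪ α) (T : Finset β) (v : α → ℝ) (c : ℝ) :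
    countLE (T.map e) v c = countLE T (v ∘ e) c := by
  rw [countLE, filter_map, card_map]
  rfl

theorem orderStatsLE_map {α β : Type*} (e : β ↪ α) (T : Finset β) (v : α → ℝ) (a : ℕ → ℝ) :
    OrderStatsLE (T.map e) v a ↔ OrderStatsLE T (v ∘ e) a := by
  simp only [OrderStatsLE, card_map, countLE_map]

theorem countLE_range (m : ℕ) (v : ℕ → ℝ) (c : ℝ) :
    countLE (range m) v c = (List.ofFn fun j : Fin m => v j).countP (· ≤ c) := by
  rw [countLE, ← Multiset.coe_countP, ← Fin.univ_val_map, Multiset.countP_map, card_filter,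
    sum_range, ← card_filter]
  rfl

theorem orderStat_le_iff_s16 {m k : ℕ} (v : ℕ → ℝ) (hk : k ∈ Icc 1 m) (c : ℝ) :
    orderStat m v k ≤ c ↔ k ≤ countLE (range m) v c := by
  obtain ⟨hk1, hkm⟩ := mem_Icc.1 hk
  have hsort := List.pairwise_insertionSort (· ≤ ·) (List.ofFn fun j : Fin m => v j)
  have hlen : k - 1 < ((List.ofFn fun j : Fin m => v j).insertionSort (· ≤ ·)).length := by
    simp only [List.length_insertionSort, List.length_ofFn]
    omega
  rw [orderStat, List.getD_eq_getElem _ _ hlen, hsort.getElem_le_iff_lt_countP,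
    (List.perm_insertionSort _ _).countP_eq, countLE_range]
  omega

theorem forall_orderStat_le_iff (m : ℕ) (v a : ℕ → ℝ) :
    (∀ i : Fin m, orderStat m v (i + 1) ≤ a (i + 1)) ↔ OrderStatsLE (range m) v a := by
  rw [OrderStatsLE, card_range]
  constructor
  · intro h k hk
    obtain ⟨hk1, hkm⟩ := mem_Icc.1 hk
    have := h ⟨k - 1, by omega⟩
    rwa [Fin.val_mk, Nat.sub_add_cancel hk1, orderStat_le_iff_s16 v hk] at this
  · intro h i
    have hi : (i : ℕ) + 1 ∈ Icc 1 m := mem_Icc.2 ⟨by omega, i.2⟩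
    exact (orderStat_le_iff_s16 v hi _).2 (h _ hi)

section Counting

variable {α : Type*} {T : Finset α} {v : α → ℝ} {m : α}

theorem countLE_le_card (T : Finset α) (v : α → ℝ) (c : ℝ) : countLE T v c ≤ #T :=
  card_filter_le _ _

theorem countLE_eq_card_iff {c : ℝ} : countLE T v c = #T ↔ ∀ j ∈ T, v j ≤ c :=
  card_filter_eq_iff

theorem countLE_erase_of_isMaxOn [DecidableEq α] (hm : m ∈ T) (hmax : ∀ j ∈ T, v j ≤ v m)
    (c : ℝ) :
    countLE (T.erase m) v c = min (countLE T v c) (#T - 1) := by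
  unfold countLE
  rw [filter_erase]
  by_cases hmc : v m ≤ c
  · have hall : ∀ j ∈ T, v j ≤ c := fun j hj => (hmax j hj).trans hmc
    rw [filter_true_of_mem hall, card_erase_of_mem hm, min_eq_right (Nat.sub_le _ _)]
  · have hmf : m ∉ {j ∈ T | v j ≤ c} := fun h => hmc (mem_filter.1 h).2
    have hlt : #{j ∈ T | v j ≤ c} < #T :=
      card_lt_card ⟨filter_subset _ _, fun h => hmf (h hm)⟩
    rw [erase_eq_of_notMem hmf, min_eq_left (by omega)]

theorem orderStatsLE_iff_of_isMaxOn [DecidableEq α] {a : ℕ → ℝ} (hm : m ∈ T)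
    (hmax : ∀ j ∈ T, v j ≤ v m) :
    OrderStatsLE T v a ↔ v m ≤ a #T ∧ OrderStatsLE (T.erase m) v a := by
  have hT : 1 ≤ #T := card_pos.2 ⟨m, hm⟩
  have htop : #T ≤ countLE T v (a #T) ↔ v m ≤ a #T := by
    rw [(countLE_le_card T v _).ge_iff_eq, countLE_eq_card_iff]
    exact ⟨fun h => h m hm, fun h j hj => (hmax j hj).trans h⟩
  simp only [OrderStatsLE, card_erase_of_mem hm, countLE_erase_of_isMaxOn hm hmax, le_min_iff,
    mem_Icc]
  constructor
  · intro h
    exact ⟨htop.1 (h _ ⟨hT, le_rfl⟩), fun k hk => ⟨h k ⟨hk.1, by omega⟩, hk.2⟩⟩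
  · rintro ⟨hmT, h⟩ k ⟨hk1, hkT⟩
    rcases hkT.lt_or_eq with hk | rfl
    · exact (h k ⟨hk1, by omega⟩).1
    · exact htop.2 hmT


def SplitLE [DecidableEq α] (R S : Finset α) (v : α → ℝ) (a : ℕ → ℝ) : Prop :=
  (∀ j ∈ S, v j ≤ a (#R - #S + 1)) ∧ OrderStatsLE (R \ S) v a

theorem splitLE_insert_iff [DecidableEq α] {R S : Finset α} {a : ℕ → ℝ}
    (ha : MonotoneOn a (Set.Icc 1 #R)) (hmR : m ∈ R) (hmax : ∀ j ∈ R, v j ≤ v m)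
    (hSR : S ⊆ R) (hmS : m ∉ S) :
    SplitLE R (insert m S) v a ↔ SplitLE R S v a := by
  have hmT : m ∈ R \ S := mem_sdiff.2 ⟨hmR, hmS⟩
  have hcardT : #(R \ S) = #R - #S := card_sdiff_of_subset hSR
  have hST : #S < #R := card_lt_card ⟨hSR, fun h => hmS (h hmR)⟩
  unfold SplitLE
  rw [orderStatsLE_iff_of_isMaxOn hmT fun j hj => hmax j (mem_sdiff.1 hj).1, hcardT, sdiff_insert,
    card_insert_of_notMem hmS, forall_mem_insert, show #R - (#S + 1) + 1 = #R - #S by omega]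
  constructor
  · rintro ⟨⟨hm, -⟩, hrest⟩
    refine ⟨fun j hj => (hmax j (hSR hj)).trans (hm.trans ?_), hm, hrest⟩
    have hS : 1 ≤ #S := card_pos.2 ⟨j, hj⟩
    exact ha ⟨by omega, by omega⟩ ⟨by omega, by omega⟩ (by omega)
  · rintro ⟨-, hm, hrest⟩
    exact ⟨⟨hm, fun j hj => (hmax j (hSR hj)).trans hm⟩, hrest⟩

open Classical in
theorem sum_powerset_neg_one_pow_mul_splitLE_eq_zero [DecidableEq α] {R : Finset α}
    (hR : R.Nonempty) {a : ℕ → ℝ} (ha : MonotoneOn a (Set.Icc 1 #R)) (v : α → ℝ) :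
    ∑ S ∈ R.powerset, (-1 : ℝ) ^ #S * (if SplitLE R S v a then 1 else 0) = 0 := by
  obtain ⟨m, hmR, hmax⟩ := R.exists_max_image v hR
  rw [show R.powerset = (insert m (R.erase m)).powerset by rw [insert_erase hmR],
    sum_powerset_insert (notMem_erase m R), ← sum_add_distrib]
  refine sum_eq_zero fun S hS => ?_
  have hSR : S ⊆ R.erase m := mem_powerset.1 hS
  have hmS : m ∉ S := fun h => notMem_erase m R (hSR h)
  rw [splitLE_insert_iff ha hmR hmax (hSR.trans (erase_subset m R)) hmS,
    card_insert_of_notMem hmS, pow_succ]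
  ring

end Counting

section Probability

variable {Ω ι : Type*} {mΩ : MeasurableSpace Ω}

theorem measurableSet_orderStatsLE {T : Finset ι} {f : ι → Ω → ℝ}
    (hf : ∀ j ∈ T, Measurable (f j)) (a : ℕ → ℝ) :
    MeasurableSet {ω | OrderStatsLE T (fun j => f j ω) a} := by
  have hcount (c : ℝ) : Measurable fun ω => countLE T (fun j => f j ω) c := by
    simp only [countLE, card_filter]
    exact Finset.measurable_sum _ fun j hj =>
      Measurable.ite (measurableSet_le (hf j hj) measurable_const) measurable_const
        measurable_const
  simp only [OrderStatsLE, Set.ofPred_forall]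
  exact MeasurableSet.iInter fun k => MeasurableSet.iInter fun _ =>
    measurableSet_le measurable_const (hcount _)

theorem measurableSet_forall_mem_le {S : Finset ι} {f : ι → Ω → ℝ}
    (hf : ∀ j ∈ S, Measurable (f j)) (c : ℝ) :
    MeasurableSet {ω | ∀ j ∈ S, f j ω ≤ c} := by
  simp only [Set.ofPred_forall]
  exact S.measurableSet_biInter fun j hj => measurableSet_le (hf j hj) measurable_const

variable {μ : Measure Ω} {Y : ι → Ω → ℝ}

theorem measure_forall_mem_le (hindep : iIndepFun Y μ) (S : Finset ι) (c : ℝ) :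
    μ {ω | ∀ j ∈ S, Y j ω ≤ c} = ∏ j ∈ S, μ {ω | Y j ω ≤ c} := by
  have hset : {ω | ∀ j ∈ S, Y j ω ≤ c} = ⋂ j ∈ S, Y j ⁻¹' Set.Iic c := by
    ext ω
    simp
  rw [hset, hindep.measure_inter_preimage_eq_mul S fun _ _ => measurableSet_Iic]
  rfl

theorem measure_splitLE [DecidableEq ι] (hmeas : ∀ j, Measurable (Y j))
    (hindep : iIndepFun Y μ) (R S : Finset ι) (a : ℕ → ℝ) :
    μ {ω | SplitLE R S (fun j => Y j ω) a} =
      (∏ j ∈ S, μ {ω | Y j ω ≤ a (#R - #S + 1)}) *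
        μ {ω | OrderStatsLE (R \ S) (fun j => Y j ω) a} := by
  let σ (T : Finset ι) : MeasurableSpace Ω :=
    ⨆ j ∈ (T : Set ι), MeasurableSpace.comap (Y j) inferInstance
  have hσ (T : Finset ι) : ∀ j ∈ T, Measurable[σ T] (Y j) := fun j hj =>
    Measurable.of_comap_le <| le_iSup₂
      (f := fun j (_ : j ∈ (T : Set ι)) => MeasurableSpace.comap (Y j) inferInstance) j hj
  have hind : Indep (σ S) (σ (R \ S)) μ :=
    indep_iSup_of_disjoint (fun j => (hmeas j).comap_le) hindep
      (by simpa using Set.disjoint_sdiff_right)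
  rw [← measure_forall_mem_le hindep]
  exact (Indep_iff _ _ _).1 hind _ _ (measurableSet_forall_mem_le (hσ S) _)
    (measurableSet_orderStatsLE (hσ (R \ S)) a)

theorem measure_orderStatsLE_eq_pi [LinearOrder ι] (hmeas : ∀ j, Measurable (Y j))
    (hindep : iIndepFun Y μ) {ν : Measure ℝ} (hlaw : ∀ j, μ.map (Y j) = ν)
    (a : ℕ → ℝ) {T : Finset ι} {k : ℕ} (hT : #T = k) :
    μ {ω | OrderStatsLE T (fun j => Y j ω) a} =
      Measure.pi (fun _ : Fin k => ν) {w | OrderStatsLE univ w a} := by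
  let e := (T.orderEmbOfFin hT).toEmbedding
  have hset : {ω | OrderStatsLE T (fun j => Y j ω) a} =
      (fun ω i => Y (e i) ω) ⁻¹' {w | OrderStatsLE univ w a} := by
    ext ω
    conv_lhs => rw [Set.mem_ofPred_eq, ← map_orderEmbOfFin_univ T hT, orderStatsLE_map]
    rfl
  have hpi : μ.map (fun ω i => Y (e i) ω) = Measure.pi fun _ : Fin k => ν := by
    rw [(hindep.precomp e.injective).map_fun_eq_pi_map fun i => (hmeas (e i)).aemeasurable]
    simp only [hlaw]
  rw [hset, ← Measure.map_apply (measurable_pi_lambda _ fun i => hmeas (e i))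
    (measurableSet_orderStatsLE (fun i _ => measurable_pi_apply i) a), hpi]

theorem sum_powerset_neg_one_pow_mul_measureReal_splitLE [DecidableEq ι] [IsFiniteMeasure μ]
    (hmeas : ∀ j, Measurable (Y j)) {R : Finset ι} (hR : R.Nonempty) {a : ℕ → ℝ}
    (ha : MonotoneOn a (Set.Icc 1 #R)) :
    ∑ S ∈ R.powerset, (-1 : ℝ) ^ #S * μ.real {ω | SplitLE R S (fun j => Y j ω) a} = 0 := by
  have hE (S : Finset ι) : MeasurableSet {ω | SplitLE R S (fun j => Y j ω) a} :=
    (measurableSet_forall_mem_le (fun j _ => hmeas j) _).inter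
      (measurableSet_orderStatsLE (fun j _ => hmeas j) a)
  calc ∑ S ∈ R.powerset, (-1 : ℝ) ^ #S * μ.real {ω | SplitLE R S (fun j => Y j ω) a}
      = ∫ ω, ∑ S ∈ R.powerset, (-1 : ℝ) ^ #S *
          {ω | SplitLE R S (fun j => Y j ω) a}.indicator 1 ω ∂μ := by
        rw [integral_finsetSum _ fun S _ =>
          ((integrable_indicator_iff (hE S)).2 (integrable_const 1).integrableOn).const_mul _]
        simp only [integral_const_mul, integral_indicator_one (hE _)]
    _ = 0 := by
        classical
        simp only [Set.indicator_apply, Set.mem_ofPred_eq, Pi.one_apply,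
          sum_powerset_neg_one_pow_mul_splitLE_eq_zero hR ha, integral_zero]

theorem map_eq_map_of_forall_measure_le_eq [IsFiniteMeasure μ] {X X' : Ω → ℝ}
    (hX : Measurable X) (hX' : Measurable X') (h : ∀ c, μ {ω | X ω ≤ c} = μ {ω | X' ω ≤ c}) :
    μ.map X = μ.map X' := by
  refine Measure.ext_of_Iic _ _ fun c => ?_
  rw [Measure.map_apply hX measurableSet_Iic, Measure.map_apply hX' measurableSet_Iic]
  exact h c

section IID

variable {Y : ℕ → Ω → ℝ} (hmeas : ∀ j, Measurable (Y j)) (hindep : iIndepFun Y μ)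
  {ν : Measure ℝ} (hlaw : ∀ j, μ.map (Y j) = ν)
include hmeas hindep hlaw

theorem measureReal_splitLE_range {n : ℕ} {S : Finset ℕ} (hS : S ⊆ range n) (a : ℕ → ℝ) :
    μ.real {ω | SplitLE (range n) S (fun j => Y j ω) a} =
      ν.real (Set.Iic (a (n - #S + 1))) ^ #S *
        μ.real {ω | OrderStatsLE (range (n - #S)) (fun j => Y j ω) a} := by
  have hcard : #(range n \ S) = n - #S := by rw [card_sdiff_of_subset hS, card_range]
  have hcdf (j : ℕ) (c : ℝ) : μ {ω | Y j ω ≤ c} = ν (Set.Iic c) := by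
    rw [← hlaw j, Measure.map_apply (hmeas j) measurableSet_Iic]
    rfl
  simp only [measureReal_def, measure_splitLE hmeas hindep, card_range, hcdf, prod_const,
    measure_orderStatsLE_eq_pi hmeas hindep hlaw a hcard,
    ← measure_orderStatsLE_eq_pi hmeas hindep hlaw a (card_range (n - #S)),
    ENNReal.toReal_mul, ENNReal.toReal_pow]

theorem measureReal_orderStatsLE_range_eq_sum [IsFiniteMeasure μ] {n : ℕ} (hn : 1 ≤ n)
    {a : ℕ → ℝ} (ha : MonotoneOn a (Set.Icc 1 n)) :
    μ.real {ω | OrderStatsLE (range n) (fun j => Y j ω) a} =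
      ∑ i ∈ Icc 1 n, (n.choose i : ℝ) * (-1) ^ (i + 1) * ν.real (Set.Iic (a (n - i + 1))) ^ i *
        μ.real {ω | OrderStatsLE (range (n - i)) (fun j => Y j ω) a} := by
  set f : ℕ → ℝ := fun m => μ.real {ω | OrderStatsLE (range m) (fun j => Y j ω) a}
  have hsum := sum_powerset_neg_one_pow_mul_measureReal_splitLE (μ := μ) hmeas
    (R := range n) (nonempty_range_iff.2 (by omega)) (a := a) (by rwa [card_range])
  rw [sum_congr rfl fun S hS =>
      by rw [measureReal_splitLE_range hmeas hindep hlaw (mem_powerset.1 hS)],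
    sum_powerset_apply_card fun i =>
      (-1 : ℝ) ^ i * (ν.real (Set.Iic (a (n - i + 1))) ^ i * f (n - i)),
    card_range, Nat.range_succ_eq_Icc_zero, ← insert_Icc_add_one_left_eq_Icc (Nat.zero_le n),
    sum_insert (by simp)] at hsum
  simp only [Nat.choose_zero_right, pow_zero, one_mul, Nat.sub_zero, one_smul, zero_add,
    nsmul_eq_mul] at hsum
  refine (eq_neg_of_add_eq_zero_left hsum).trans ?_
  rw [← sum_neg_distrib]
  exact sum_congr rfl fun i _ => by ring

end IID

end Probability

theorem frechetCDF_nonneg (x : ℝ) : 0 ≤ frechetCDF x := by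
  unfold frechetCDF
  split_ifs <;> positivity

theorem frechetCDF_pow {c : ℝ} (hc : 0 < c) (k : ℕ) :
    frechetCDF c ^ k = Real.exp (-((k : ℝ) / c)) := by
  rw [frechetCDF, if_pos hc, ← Real.exp_nat_mul, div_eq_mul_inv, mul_neg]

/-- Let `Y_(1) ≤ ⋯ ≤ Y_(n)` be the order statistics of `n` i.i.d.
unit Fréchet random variables, `t > 0` and `0 < x_1 ≤ ⋯ ≤ x_n`. Define
`f_m(t, x_1, …, x_m) = P(Y_(1) ≤ t x_1, …, Y_(m) ≤ t x_m)` (with `f_0(t) = 1`, and the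
order statistics taken from `m` i.i.d. unit Fréchet variables). Then
`f_n = ∑_{i=1}^n C(n,i) (-1)^{i+1} e^{-i/(t x_{n-i+1})} f_{n-i}`. -/
theorem stmt16 {Ω : Type*} [MeasurableSpace Ω] (μ : Measure Ω) [IsProbabilityMeasure μ]
    (Y : ℕ → Ω → ℝ)
    (hmeas : ∀ i, Measurable (Y i))
    (hindep : iIndepFun Y μ)
    (hY : ∀ i x, μ {ω | Y i ω ≤ x} = ENNReal.ofReal (frechetCDF x))
    (t : ℝ) (ht : 0 < t) (n : ℕ) (hn : 1 ≤ n) (x : ℕ → ℝ)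
    (hxpos : ∀ i, 1 ≤ i → i ≤ n → 0 < x i)
    (hxmono : ∀ i j, 1 ≤ i → i ≤ j → j ≤ n → x i ≤ x j) :
    (μ {ω | ∀ i : Fin n,
        orderStat n (fun j => Y j ω) (i + 1) ≤ t * x (i + 1)}).toReal =
      ∑ i ∈ Finset.Icc 1 n, (n.choose i : ℝ) * (-1 : ℝ) ^ (i + 1) *
        Real.exp (-((i : ℝ) / (t * x (n - i + 1)))) *
        (μ {ω | ∀ l : Fin (n - i),
          orderStat (n - i) (fun j => Y j ω) (l + 1) ≤ t * x (l + 1)}).toReal := by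
  set a : ℕ → ℝ := fun k => t * x k
  have hevent (m : ℕ) :
      {ω | ∀ i : Fin m, orderStat m (fun j => Y j ω) (i + 1) ≤ t * x (i + 1)} =
        {ω | OrderStatsLE (range m) (fun j => Y j ω) a} :=
    Set.ext fun ω => forall_orderStat_le_iff m _ a
  have hlaw (j : ℕ) : μ.map (Y j) = μ.map (Y 0) :=
    map_eq_map_of_forall_measure_le_eq (hmeas j) (hmeas 0) fun c => (hY j c).trans (hY 0 c).symm
  have ha : MonotoneOn a (Set.Icc 1 n) := fun i hi j hj hij =>
    mul_le_mul_of_nonneg_left (hxmono i j hi.1 hij hj.2) ht.le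
  have hcdf (c : ℝ) : (μ.map (Y 0)).real (Set.Iic c) = frechetCDF c := by
    rw [map_measureReal_apply (hmeas 0) measurableSet_Iic, measureReal_def]
    exact (congrArg ENNReal.toReal (hY 0 c)).trans (ENNReal.toReal_ofReal (frechetCDF_nonneg c))
  simp only [← measureReal_def, hevent]
  rw [measureReal_orderStatsLE_range_eq_sum hmeas hindep hlaw hn ha]
  refine sum_congr rfl fun i hi => ?_
  obtain ⟨hi1, hin⟩ := mem_Icc.1 hi
  rw [hcdf, frechetCDF_pow (mul_pos ht (hxpos _ (by omega) (by omega)))]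
end
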